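/- There exists a constant C > 0 such that for all integers n ≥ 1 and all integers k with |k − n/2| < n/4, one has | C(n, k) / ( √(n / (2π k (n − k))) · exp(n · I(k/n)) ) − 1 | ≤ C/n. -/

import Mathlib

/-- The entropy-like function `I(t) = (t-1) log(1-t) - t log t`. Since `Real.log 0 = 0`
in Mathlib, this automatically satisfies the conventions `I(0) = I(1) = 0`. -/
noncomputable def Ifun (t : ℝ) : ℝ := (t - 1) * Real.log (1 - t) - t * Real.log t

/-! Write `m! = s_m √(2m) (m/e)^m` with Mathlib's Stirling sequence `s_m`. Since
`exp (n I(k/n)) = n^n / (k^k (n-k)^(n-k))`, the ratio in the theorem is exactly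
`√π s_n / (s_k s_{n-k})`. The sequence `s_m` decreases to `√π`, and Robbins' bound
`log s_m - log s_{m+1} ≤ 1/(12m) - 1/(12(m+1))` telescopes to `s_m ≤ √π exp (1/(12m))`.
Hence the ratio lies between `exp (-n/(12k(n-k)))` and `exp (1/(12n))`, so it is within
`n/(12k(n-k))` of `1`; for `|k - n/2| < n/4` we have `k(n-k) > 3n²/16`, giving the bound `1/n`. -/

open Real Nat Filter Topology

namespace Stirling

theorem monotone_log_stirlingSeq_succ_sub :
    Monotone fun m : ℕ => log (stirlingSeq (m + 1)) - 1 / (12 * (m + 1 : ℝ)) := by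
  refine monotone_nat_of_le_succ fun m => ?_
  have h := log_stirlingSeq_sdiff_le (m + 1)
  have htel : 1 / (12 * ((m + 1 : ℕ) : ℝ) * ((m + 1 : ℕ) + 1)) =
      1 / (12 * (m + 1 : ℝ)) - 1 / (12 * ((m + 1 : ℕ) + 1 : ℝ)) := by
    push_cast; field_simp; ring
  push_cast at h htel ⊢
  linarith

theorem stirlingSeq_le_sqrt_pi_mul_exp {n : ℕ} (hn : n ≠ 0) :
    stirlingSeq n ≤ √π * exp (1 / (12 * n)) := by
  obtain ⟨m, rfl⟩ := Nat.exists_eq_succ_of_ne_zero hn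
  have hlim : Tendsto (fun m : ℕ => log (stirlingSeq (m + 1)) - 1 / (12 * (m + 1 : ℝ))) atTop
      (𝓝 (log √π - 0)) := by
    refine ((continuousAt_log (by positivity)).tendsto.comp
      (tendsto_stirlingSeq_sqrt_pi.comp (tendsto_add_atTop_nat 1))).sub ?_
    exact tendsto_const_nhds.div_atTop <| (tendsto_natCast_atTop_atTop.atTop_add
      tendsto_const_nhds).const_mul_atTop (by norm_num)
  have h := monotone_log_stirlingSeq_succ_sub.ge_of_tendsto hlim m
  rw [sub_zero, sub_le_iff_le_add, ← exp_le_exp, exp_add, exp_log (stirlingSeq'_pos m),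
    exp_log (by positivity)] at h
  push_cast
  exact h

theorem stirlingSeq_pos {n : ℕ} (hn : n ≠ 0) : 0 < stirlingSeq n :=
  (sqrt_pos.2 pi_pos).trans_le (sqrt_pi_le_stirlingSeq hn)

end Stirling

open Stirling

theorem mul_Ifun_div {x t : ℝ} (hx : x ≠ 0) (ht : t ≠ 0) (hxt : x - t ≠ 0) :
    x * Ifun (t / x) = x * log x - t * log t - (x - t) * log (x - t) := by
  have h1 : 1 - t / x = (x - t) / x := by field_simp
  rw [Ifun, h1, log_div hxt hx, log_div ht hx]
  field_simp
  ring

theorem exp_mul_Ifun_div {n k : ℕ} (hk : k ≠ 0) (hkn : k < n) :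
    exp (n * Ifun (k / n)) = (n : ℝ) ^ n / ((k : ℝ) ^ k * ((n - k : ℕ) : ℝ) ^ (n - k)) := by
  have hk' : (0 : ℝ) < k := by positivity
  have hb : (0 : ℝ) < (n - k : ℕ) := by simp [hkn]
  have hn : (0 : ℝ) < n := by simp; omega
  rw [mul_Ifun_div hn.ne' hk'.ne' (by rw [← Nat.cast_sub hkn.le]; exact hb.ne'),
    ← Nat.cast_sub hkn.le, sub_sub, exp_sub, exp_add, exp_nat_mul, exp_nat_mul, exp_nat_mul,
    exp_log hn, exp_log hk', exp_log hb]

theorem factorial_eq_stirlingSeq_mul {m : ℕ} (hm : m ≠ 0) :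
    (m ! : ℝ) = stirlingSeq m * (√(2 * m) * (m / exp 1) ^ m) := by
  rw [stirlingSeq, div_mul_cancel₀]
  positivity

noncomputable def binomialStirlingApprox (n k : ℕ) : ℝ :=
  √(n / (2 * π * k * (n - k))) * exp (n * Ifun (k / n))

theorem choose_div_binomialStirlingApprox {n k : ℕ} (hk : k ≠ 0) (hkn : k < n) :
    (n.choose k : ℝ) / binomialStirlingApprox n k =
      √π * stirlingSeq n / (stirlingSeq k * stirlingSeq (n - k)) := by
  have hb : n - k ≠ 0 := by omega
  have hn : n ≠ 0 := by omega
  have hsqrt : √(n / (2 * π * k * (n - k))) =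
      √(2 * n) / (√π * (√(2 * k) * √(2 * (n - k : ℕ)))) := by
    rw [← sqrt_mul (by positivity), ← sqrt_mul (by positivity), ← sqrt_div (by positivity),
      Nat.cast_sub hkn.le]
    congr 1
    have : (n : ℝ) - k ≠ 0 := by rw [← Nat.cast_sub hkn.le]; positivity
    field_simp
  have hexp : exp 1 ^ n = exp 1 ^ k * exp 1 ^ (n - k) := by
    rw [← pow_add, Nat.add_sub_cancel' hkn.le]
  rw [binomialStirlingApprox, hsqrt, exp_mul_Ifun_div hk hkn, cast_choose ℝ hkn.le,
    factorial_eq_stirlingSeq_mul hn, factorial_eq_stirlingSeq_mul hk,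
    factorial_eq_stirlingSeq_mul hb, div_pow, div_pow, div_pow, hexp]
  have := stirlingSeq_pos hk
  have := stirlingSeq_pos hb
  field_simp

theorem choose_div_binomialStirlingApprox_le_exp {n k : ℕ} (hk : k ≠ 0) (hkn : k < n) :
    (n.choose k : ℝ) / binomialStirlingApprox n k ≤ exp (1 / (12 * n)) := by
  have hb : n - k ≠ 0 := by omega
  rw [choose_div_binomialStirlingApprox hk hkn,
    div_le_iff₀ (mul_pos (stirlingSeq_pos hk) (stirlingSeq_pos hb))]
  calc √π * stirlingSeq n ≤ √π * (√π * exp (1 / (12 * n))) := by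
        gcongr; exact stirlingSeq_le_sqrt_pi_mul_exp (by omega)
    _ = exp (1 / (12 * n)) * (√π * √π) := by ring
    _ ≤ exp (1 / (12 * n)) * (stirlingSeq k * stirlingSeq (n - k)) := by
        gcongr
        · exact (stirlingSeq_pos hk).le
        · exact sqrt_pi_le_stirlingSeq hk
        · exact sqrt_pi_le_stirlingSeq hb

theorem exp_neg_le_choose_div_binomialStirlingApprox {n k : ℕ} (hk : k ≠ 0) (hkn : k < n) :
    exp (-(1 / (12 * k) + 1 / (12 * (n - k : ℕ)))) ≤
      (n.choose k : ℝ) / binomialStirlingApprox n k := by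
  have hb : n - k ≠ 0 := by omega
  rw [choose_div_binomialStirlingApprox hk hkn,
    le_div_iff₀ (mul_pos (stirlingSeq_pos hk) (stirlingSeq_pos hb)), exp_neg,
    inv_mul_le_iff₀ (exp_pos _)]
  calc stirlingSeq k * stirlingSeq (n - k)
      ≤ (√π * exp (1 / (12 * k))) * (√π * exp (1 / (12 * (n - k : ℕ)))) := by
        gcongr
        · exact (stirlingSeq_pos hb).le
        · exact stirlingSeq_le_sqrt_pi_mul_exp hk
        · exact stirlingSeq_le_sqrt_pi_mul_exp hb
    _ = exp (1 / (12 * k) + 1 / (12 * (n - k : ℕ))) * (√π * √π) := by rw [exp_add]; ring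
    _ ≤ exp (1 / (12 * k) + 1 / (12 * (n - k : ℕ))) * (√π * stirlingSeq n) := by
        gcongr; exact sqrt_pi_le_stirlingSeq (by omega)

theorem abs_choose_div_binomialStirlingApprox_sub_one_le {n k : ℕ} (hk : k ≠ 0) (hkn : k < n) :
    |(n.choose k : ℝ) / binomialStirlingApprox n k - 1| ≤ n / (12 * k * (n - k)) := by
  have hk' : (0 : ℝ) < k := by positivity
  have hnk : (0 : ℝ) < n - k := by simpa using hkn
  have hn : (1 : ℝ) ≤ n := by simp; omega
  have hsum : 1 / (12 * k) + 1 / (12 * (n - k : ℕ)) = (n / (12 * k * (n - k)) : ℝ) := by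
    rw [Nat.cast_sub hkn.le]; field_simp; ring
  have hw : 0 ≤ 1 / (12 * (n : ℝ)) := by positivity
  have h2w : 2 * (1 / (12 * (n : ℝ))) ≤ n / (12 * k * (n - k)) := by
    calc 2 * (1 / (12 * (n : ℝ))) = 1 / (6 * n) := by field_simp; norm_num
      _ ≤ n / (12 * k * (n - k)) := by
        rw [div_le_div_iff₀ (by positivity) (by positivity)]
        nlinarith [sq_nonneg ((n : ℝ) - 2 * k)]
  have hexp := abs_exp_sub_one_le (x := 1 / (12 * (n : ℝ)))
    (by rw [abs_of_nonneg hw, div_le_one (by positivity)]; linarith)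
  rw [abs_of_nonneg hw] at hexp
  refine abs_le.2 ⟨?_, ?_⟩
  · have := add_one_le_exp (-(1 / (12 * k) + 1 / (12 * (n - k : ℕ))))
    linarith [exp_neg_le_choose_div_binomialStirlingApprox hk hkn]
  · calc _ ≤ exp (1 / (12 * (n : ℝ))) - 1 := by
          linarith [choose_div_binomialStirlingApprox_le_exp hk hkn]
      _ ≤ 2 * (1 / (12 * n)) := (le_abs_self _).trans hexp
      _ ≤ _ := h2w

theorem binomial_asymptotic :
    ∃ C : ℝ, 0 < C ∧ ∀ n : ℕ, 1 ≤ n → ∀ k : ℕ, |(k : ℝ) - n / 2| < (n : ℝ) / 4 →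
      |(n.choose k : ℝ) /
          (Real.sqrt ((n : ℝ) / (2 * Real.pi * k * ((n : ℝ) - k))) *
            Real.exp (n * Ifun ((k : ℝ) / n))) - 1| ≤ C / n := by
  refine ⟨1, one_pos, fun n hn k hk => ?_⟩
  obtain ⟨hk_low, hk_high⟩ := abs_lt.1 hk
  have hn' : (0 : ℝ) < n := by exact_mod_cast hn
  have hk0 : k ≠ 0 := by rintro rfl; simp at hk_low; linarith
  have hkn : k < n := by exact_mod_cast (by linarith : (k : ℝ) < n)
  calc _ ≤ (n / (12 * k * (n - k)) : ℝ) :=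
        abs_choose_div_binomialStirlingApprox_sub_one_le hk0 hkn
    _ ≤ 1 / n := by
      rw [div_le_div_iff₀ (by nlinarith) hn']
      nlinarith
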